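/- arXiv:1307.4691 — 4 statements merged into one kernel-verified Lean document; each statement's English description precedes it below -/
import Mathlib

section
/- For all integers $q \ge 2$ and $q' \ge 2$, $\sum_{r=1}^{q \wedge q'} ((r-1)!)^2 \binom{q-1}{r-1}^2 \binom{q'-1}{r-1}^2 (q+q'-2r)! \le (q-1)!\,(q'-1)!\,3^{q+q'-2}$. -/
/-!
Writing `m = q - 1`, `n = q' - 1` and `i = r - 1`, each summand equals
`m! n! · C(m,i) C(n,i) C(m+n-2i, m-i)`. Bounding the last binomial by `2^(m-i) 2^(n-i)` leaves
`m! n! · aᵢ bᵢ` with `aᵢ = C(m,i) 2^(m-i)` and `bᵢ = C(n,i) 2^(n-i)`, and since every term is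
nonnegative, `∑ aᵢ bᵢ ≤ (∑ aᵢ)(∑ bᵢ) = 3^m 3^n` by the binomial theorem for `(1 + 2)^m`.
-/

open Finset

namespace Nat

theorem sum_range_choose_mul_two_pow (n : ℕ) :
    ∑ i ∈ range (n + 1), n.choose i * 2 ^ (n - i) = 3 ^ n := by
  simpa [mul_comm] using (add_pow (1 : ℕ) 2 n).symm

theorem choose_mul_two_pow_le_three_pow {n i : ℕ} (hi : i ≤ n) :
    n.choose i * 2 ^ (n - i) ≤ 3 ^ n :=
  sum_range_choose_mul_two_pow n ▸
    single_le_sum (f := fun j ↦ n.choose j * 2 ^ (n - j)) (fun _ _ ↦ zero_le _)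
      (mem_range.mpr (lt_succ_of_le hi))

theorem factorial_sq_mul_choose_sq_mul_choose_sq_mul_factorial {m n i : ℕ} (hm : i ≤ m)
    (hn : i ≤ n) :
    i ! ^ 2 * m.choose i ^ 2 * n.choose i ^ 2 * (m + n - 2 * i)! =
      m ! * n ! * (m.choose i * n.choose i * (m - i + (n - i)).choose (m - i)) := by
  have hm! := choose_mul_factorial_mul_factorial hm
  have hn! := choose_mul_factorial_mul_factorial hn
  have hmn! := add_choose_mul_factorial_mul_factorial (m - i) (n - i)
  rw [← choose_symm_add] at hmn!
  rw [show m + n - 2 * i = m - i + (n - i) by omega, ← hmn!, ← hm!, ← hn!]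
  ring

theorem factorial_sq_mul_choose_sq_mul_choose_sq_mul_factorial_le {m n i : ℕ} (hm : i ≤ m)
    (hn : i ≤ n) :
    i ! ^ 2 * m.choose i ^ 2 * n.choose i ^ 2 * (m + n - 2 * i)! ≤
      m ! * n ! * (m.choose i * 2 ^ (m - i) * (n.choose i * 2 ^ (n - i))) := by
  rw [factorial_sq_mul_choose_sq_mul_choose_sq_mul_factorial hm hn]
  have hchoose : (m - i + (n - i)).choose (m - i) ≤ 2 ^ (m - i) * 2 ^ (n - i) :=
    pow_add 2 (m - i) (n - i) ▸ choose_le_two_pow _ _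
  calc m ! * n ! * (m.choose i * n.choose i * (m - i + (n - i)).choose (m - i))
      ≤ m ! * n ! * (m.choose i * n.choose i * (2 ^ (m - i) * 2 ^ (n - i))) := by gcongr
    _ = m ! * n ! * (m.choose i * 2 ^ (m - i) * (n.choose i * 2 ^ (n - i))) := by ring

theorem sum_factorial_sq_mul_choose_sq_mul_choose_sq_mul_factorial_le (m n : ℕ) :
    ∑ i ∈ range (min m n + 1), i ! ^ 2 * m.choose i ^ 2 * n.choose i ^ 2 * (m + n - 2 * i)! ≤
      m ! * n ! * 3 ^ (m + n) := by
  calc ∑ i ∈ range (min m n + 1), i ! ^ 2 * m.choose i ^ 2 * n.choose i ^ 2 * (m + n - 2 * i)!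
      ≤ ∑ i ∈ range (min m n + 1), m ! * n ! * (m.choose i * 2 ^ (m - i) * 3 ^ n) := by
        refine sum_le_sum fun i hi ↦ ?_
        have hi : i ≤ min m n := Nat.lt_add_one_iff.mp (mem_range.mp hi)
        have hm := hi.trans (min_le_left m n)
        have hn := hi.trans (min_le_right m n)
        grw [factorial_sq_mul_choose_sq_mul_choose_sq_mul_factorial_le hm hn,
          choose_mul_two_pow_le_three_pow hn]
    _ ≤ ∑ i ∈ range (m + 1), m ! * n ! * (m.choose i * 2 ^ (m - i) * 3 ^ n) :=
        sum_le_sum_of_subset (range_subset_range.mpr (by omega))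
    _ = m ! * n ! * 3 ^ (m + n) := by
        rw [← mul_sum, ← sum_mul, sum_range_choose_mul_two_pow, pow_add]

end Nat

theorem stmt_2_general (q q' : ℕ) :
    ∑ r ∈ Finset.Icc 1 (min q q'),
        ((r - 1).factorial) ^ 2 * (Nat.choose (q - 1) (r - 1)) ^ 2 *
          (Nat.choose (q' - 1) (r - 1)) ^ 2 * (q + q' - 2 * r).factorial
      ≤ (q - 1).factorial * (q' - 1).factorial * 3 ^ (q + q' - 2) := by
  rcases Nat.eq_zero_or_pos (min q q') with hmin | hmin
  · simp [hmin]
  rw [show min q q' = min (q - 1) (q' - 1) + 1 by omega, ← Ico_add_one_right_eq_Icc,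
    sum_Ico_eq_sum_range, add_tsub_cancel_right]
  simp only [add_tsub_cancel_left]
  convert Nat.sum_factorial_sq_mul_choose_sq_mul_choose_sq_mul_factorial_le (q - 1) (q' - 1)
    using 4 <;> omega

/-- For all integers `q, q' ≥ 2`,
`∑_{r=1}^{q ∧ q'} ((r-1)!)² C(q-1,r-1)² C(q'-1,r-1)² (q+q'-2r)! ≤ (q-1)! (q'-1)! 3^{q+q'-2}`. -/
theorem stmt_2 (q q' : ℕ) (hq : 2 ≤ q) (hq' : 2 ≤ q') :
    ∑ r ∈ Finset.Icc 1 (min q q'),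
        ((r - 1).factorial) ^ 2 * (Nat.choose (q - 1) (r - 1)) ^ 2 *
          (Nat.choose (q' - 1) (r - 1)) ^ 2 * (q + q' - 2 * r).factorial
      ≤ (q - 1).factorial * (q' - 1).factorial * 3 ^ (q + q' - 2) :=
  stmt_2_general q q'
end

section
/- For the Bessel function $J_0$ of the first kind of order zero, $|J_0(x)| \le x^{-1/2}$ for all $x > 0$. -/
/-!
With `J₁` the Bessel function of order one, `J₀' = -J₁` and `(x J₁)' = x J₀`. The energy
`E x = x (J₀² + J₁²) - J₀ J₁ + J₀² / (2x)` then satisfies `E' = -J₀² / (2x²) ≤ 0` and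
`E - x J₀² = (x J₁ - J₀/2)² / x + J₀² / (4x) ≥ 0`, so `x J₀(x)² ≤ E 1` for `x ≥ 1`, and the
alternating series for `J₀(1)` and `J₁(1)` give `E 1 < 1`. For `x ≤ 1` the series of `J₀(x)` is
alternating with decreasing terms, hence `|J₀(x)| ≤ 1 ≤ x^{-1/2}`.
-/

/-- The Bessel function of the first kind of order zero. -/
noncomputable def besselJ0 (x : ℝ) : ℝ :=
  ∑' k : ℕ, (-1) ^ k * x ^ (2 * k) / (2 ^ (2 * k) * (k.factorial : ℝ) ^ 2)

open scoped Nat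
open Set Topology

theorem hasDerivAt_tsum_mul_pow {a : ℕ → ℝ} {e : ℕ → ℕ}
    (ha : ∀ R, Summable fun k => |a k| * R ^ e k) (x : ℝ) :
    HasDerivAt (fun y => ∑' k, a k * y ^ e k) (∑' k, a k * e k * x ^ (e k - 1)) x := by
  -- `k R^(k-1) ≤ (2R)^k` for `R ≥ 1`: on the ball of radius `R` the derivative series is
  -- dominated by the given series at `2R`.
  set R := |x| + 1
  have hR : 1 ≤ R := by simp [R]
  have hx : x ∈ Metric.ball (0 : ℝ) R := by simp [R]
  refine hasDerivAt_tsum_of_isPreconnected (g := fun k y => a k * y ^ e k)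
    (g' := fun k y => a k * e k * y ^ (e k - 1)) (ha (2 * R)) Metric.isOpen_ball
    (convex_ball 0 R).isPreconnected (fun k y _ => ?_) (fun k y hy => ?_) hx ?_ hx
  · simpa [mul_assoc] using (hasDerivAt_pow (e k) y).const_mul (a k)
  · have hy : |y| ≤ R := (mem_ball_zero_iff.1 hy).le
    rw [Real.norm_eq_abs, abs_mul, abs_mul, abs_pow, Nat.abs_cast, mul_assoc, mul_pow]
    gcongr
    · exact_mod_cast Nat.lt_two_pow_self.le
    · exact (pow_le_pow_left₀ (abs_nonneg y) hy _).trans (pow_le_pow_right₀ hR (Nat.sub_le _ _))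
  · exact .of_norm_bounded (ha |x|) fun k => by simp

noncomputable def besselJTerm (n : ℕ) (x : ℝ) (k : ℕ) : ℝ :=
  (x / 2) ^ (2 * k + n) / (k ! * (k + n)!)

noncomputable def besselJ (n : ℕ) (x : ℝ) : ℝ :=
  ∑' k, (-1) ^ k * besselJTerm n x k

theorem summable_besselJTerm (n : ℕ) (x : ℝ) : Summable (besselJTerm n x) := by
  refine .of_norm_bounded ((Real.summable_pow_div_factorial (|x / 2| ^ 2)).mul_left
    (|x / 2| ^ n)) fun k => ?_
  have hfac : (1 : ℝ) ≤ (k + n)! := by exact_mod_cast (k + n).factorial_pos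
  calc ‖besselJTerm n x k‖ = |x / 2| ^ (2 * k + n) / (k ! * (k + n)!) := by
        simp [besselJTerm, abs_div]
    _ ≤ |x / 2| ^ (2 * k + n) / k ! :=
        div_le_div_of_nonneg_left (by positivity) (by positivity)
          (le_mul_of_one_le_right (by positivity) hfac)
    _ = |x / 2| ^ n * ((|x / 2| ^ 2) ^ k / k !) := by ring

theorem besselJTerm_succ_le {n : ℕ} {x : ℝ} (hx₀ : 0 ≤ x) (hx₂ : x ≤ 2) (k : ℕ) :
    besselJTerm n x (k + 1) ≤ besselJTerm n x k := by
  have hq : (x / 2) ^ 2 ≤ (k + 1) * (k + n + 1) := by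
    have : (x / 2) ^ 2 ≤ 1 := by rw [div_pow]; nlinarith
    nlinarith [show (0 : ℝ) ≤ k by positivity, show (0 : ℝ) ≤ n by positivity]
  rw [besselJTerm, besselJTerm, show 2 * (k + 1) + n = 2 * k + n + 2 by ring, pow_add,
    show k + 1 + n = k + n + 1 by ring, Nat.factorial_succ, Nat.factorial_succ]
  push_cast
  rw [div_le_div_iff₀ (by positivity) (by positivity)]
  have : 0 ≤ (x / 2) ^ (2 * k + n) * (k ! * (k + n)!) := by positivity
  nlinarith

theorem abs_besselJ_sub_sum_le {n : ℕ} {x : ℝ} (hx₀ : 0 ≤ x) (hx₂ : x ≤ 2) (m : ℕ) :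
    |besselJ n x - ∑ k ∈ Finset.range m, (-1) ^ k * besselJTerm n x k| ≤ besselJTerm n x m :=
  alternating_series_error_bound _ (antitone_nat_of_succ_le (besselJTerm_succ_le hx₀ hx₂))
    (summable_besselJTerm n x) m

theorem besselJ0_eq_besselJ_zero : besselJ0 = besselJ 0 := by
  funext x
  refine tsum_congr fun k => ?_
  simp only [besselJTerm, add_zero, div_pow, sq]
  ring

theorem hasDerivAt_besselJ_zero (x : ℝ) : HasDerivAt (besselJ 0) (-besselJ 1 x) x := by
  have h := hasDerivAt_tsum_mul_pow (a := fun k => (-1) ^ k / (2 ^ (2 * k) * (k ! * k !)))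
    (e := fun k => 2 * k) (fun R => (summable_besselJTerm 0 R).congr fun k => by
      simp only [besselJTerm, abs_div, abs_pow, abs_neg, abs_one, one_pow, add_zero, div_pow]
      rw [abs_of_pos (by positivity)]
      ring) x
  convert h using 1
  · funext y
    refine tsum_congr fun k => ?_
    simp only [besselJTerm, add_zero, div_pow]
    ring
  · have hterm : ∀ k : ℕ, (-1) ^ (k + 1) / (2 ^ (2 * (k + 1)) * ((k + 1)! * (k + 1)! : ℝ)) *
        ((2 * (k + 1) : ℕ) : ℝ) * x ^ (2 * (k + 1) - 1) = -((-1) ^ k * besselJTerm 1 x k) := by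
      intro k
      rw [show 2 * (k + 1) - 1 = 2 * k + 1 by omega, besselJTerm, div_pow, Nat.factorial_succ]
      push_cast
      field_simp
      ring
    rw [tsum_eq_zero_add'
      ((summable_besselJTerm 1 x).alternating.neg.congr fun k => (hterm k).symm)]
    simp only [hterm]
    simp [besselJ, tsum_neg]

theorem hasDerivAt_pow_mul_besselJ_succ (n : ℕ) (x : ℝ) :
    HasDerivAt (fun y => y ^ (n + 1) * besselJ (n + 1) y) (x ^ (n + 1) * besselJ n x) x := by
  have h := hasDerivAt_tsum_mul_pow
    (a := fun k => (-1) ^ k / (2 ^ (2 * k + n + 1) * (k ! * (k + n + 1)! : ℝ)))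
    (e := fun k => 2 * k + 2 * n + 2)
    (fun R => ((summable_besselJTerm (n + 1) R).mul_left (R ^ (n + 1))).congr fun k => by
      simp only [besselJTerm, abs_div, abs_pow, abs_neg, abs_one, one_pow, div_pow]
      rw [abs_of_pos (by positivity)]
      ring_nf) x
  convert h using 1
  · funext y
    rw [besselJ, ← tsum_mul_left]
    refine tsum_congr fun k => ?_
    simp only [besselJTerm, div_pow]
    ring_nf
  · rw [besselJ, ← tsum_mul_left]
    refine tsum_congr fun k => ?_
    rw [show 2 * k + 2 * n + 2 - 1 = 2 * k + n + (n + 1) by omega, besselJTerm, div_pow,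
      Nat.factorial_succ]
    push_cast
    field_simp
    ring_nf

theorem hasDerivAt_besselJ_one {x : ℝ} (hx : x ≠ 0) :
    HasDerivAt (besselJ 1) (besselJ 0 x - besselJ 1 x / x) x := by
  have h := (hasDerivAt_pow_mul_besselJ_succ 0 x).div (hasDerivAt_id x) hx
  have heq : (fun y => y ^ (0 + 1) * besselJ (0 + 1) y / id y) =ᶠ[𝓝 x] besselJ 1 := by
    filter_upwards [isOpen_ne.mem_nhds hx] with y hy
    simp [mul_div_cancel_left₀ _ hy]
  refine (h.congr_of_eventuallyEq heq.symm).congr_deriv ?_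
  simp only [id, pow_one, zero_add]
  field_simp

noncomputable def besselEnergy (x : ℝ) : ℝ :=
  x * (besselJ 0 x ^ 2 + besselJ 1 x ^ 2) - besselJ 0 x * besselJ 1 x + besselJ 0 x ^ 2 / (2 * x)

theorem hasDerivAt_besselEnergy {x : ℝ} (hx : x ≠ 0) :
    HasDerivAt besselEnergy (-besselJ 0 x ^ 2 / (2 * x ^ 2)) x := by
  have h₀ := hasDerivAt_besselJ_zero x
  have h₁ := hasDerivAt_besselJ_one hx
  have h := (((hasDerivAt_id x).mul ((h₀.pow 2).add (h₁.pow 2))).sub (h₀.mul h₁)).add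
    ((h₀.pow 2).div ((hasDerivAt_id x).const_mul 2) (by simpa using hx))
  refine h.congr_deriv ?_
  simp only [id, Pi.add_apply, Pi.pow_apply]
  field_simp
  ring

theorem antitoneOn_besselEnergy : AntitoneOn besselEnergy (Ioi 0) := by
  refine antitoneOn_of_hasDerivWithinAt_nonpos (f' := fun x => -besselJ 0 x ^ 2 / (2 * x ^ 2))
    (convex_Ioi 0)
    (fun x hx => (hasDerivAt_besselEnergy hx.ne').continuousAt.continuousWithinAt) ?_ ?_ <;>
    rw [interior_Ioi]
  · exact fun x hx => (hasDerivAt_besselEnergy hx.ne').hasDerivWithinAt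
  · exact fun x _ => div_nonpos_of_nonpos_of_nonneg (neg_nonpos.2 (sq_nonneg _)) (by positivity)

theorem mul_besselJ_zero_sq_le_besselEnergy {x : ℝ} (hx : 0 < x) :
    x * besselJ 0 x ^ 2 ≤ besselEnergy x := by
  have key : besselEnergy x - x * besselJ 0 x ^ 2 =
      (x * besselJ 1 x - besselJ 0 x / 2) ^ 2 / x + besselJ 0 x ^ 2 / (4 * x) := by
    rw [besselEnergy]; field_simp; ring
  have : 0 ≤ (x * besselJ 1 x - besselJ 0 x / 2) ^ 2 / x + besselJ 0 x ^ 2 / (4 * x) := by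
    positivity
  linarith

theorem abs_besselJ_zero_le_one {x : ℝ} (hx₀ : 0 ≤ x) (hx₂ : x ≤ 2) : |besselJ 0 x| ≤ 1 := by
  simpa [besselJTerm] using abs_besselJ_sub_sum_le (n := 0) hx₀ hx₂ 0

theorem besselEnergy_one_le_one : besselEnergy 1 ≤ 1 := by
  have h₀ := abs_le.1 (abs_besselJ_sub_sum_le (n := 0) zero_le_one one_le_two 2)
  have h₁ := abs_le.1 (abs_besselJ_sub_sum_le (n := 1) zero_le_one one_le_two 1)
  -- `|J₀(1) - 3/4| ≤ 1/64` and `|J₁(1) - 1/2| ≤ 1/16`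
  norm_num [besselJTerm, Finset.sum_range_succ, Nat.factorial] at h₀ h₁
  rw [besselEnergy]
  norm_num
  nlinarith

/-- `|J₀(x)| ≤ x^{-1/2}` for all `x > 0`. -/
theorem stmt_8 (x : ℝ) (hx : 0 < x) : |besselJ0 x| ≤ (Real.sqrt x)⁻¹ := by
  suffices x * besselJ 0 x ^ 2 ≤ 1 by
    rw [besselJ0_eq_besselJ_zero, ← Real.sqrt_sq_eq_abs, ← Real.sqrt_inv]
    exact Real.sqrt_le_sqrt (by rwa [← mul_one x⁻¹, le_inv_mul_iff₀ hx])
  rcases le_or_gt x 1 with hx₁ | hx₁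
  · have : besselJ 0 x ^ 2 ≤ 1 :=
      (sq_le_one_iff_abs_le_one _).2 (abs_besselJ_zero_le_one hx.le (by linarith))
    nlinarith
  · calc x * besselJ 0 x ^ 2 ≤ besselEnergy x := mul_besselJ_zero_sq_le_besselEnergy hx
      _ ≤ besselEnergy 1 := antitoneOn_besselEnergy (mem_Ioi.2 one_pos) (mem_Ioi.2 hx) hx₁.le
      _ ≤ 1 := besselEnergy_one_le_one
end

section
/- Fix real numbers $x_1, x_2, x_3 > 0$ satisfying the strict triangle inequalities. Define for integers $\ell$ (with $\lfloor \ell x_1 \rfloor + \lfloor \ell x_2 \rfloor + \lfloor \ell x_3 \rfloor$ even) $g_{\ell} = \left(\begin{smallmatrix} \lfloor \ell x_1 \rfloor & \lfloor \ell x_2 \rfloor & \lfloor \ell x_3 \rfloor \\ 0 & 0 & 0 \end{smallmatrix}\right)^2$, where the squared Wigner 3j symbol with zero magnetic indices of even total degree $\lambda_0 = a+b+c$ equals $\frac{((\lambda_0/2)!)^2}{((\lambda_1/2)!(\lambda_2/2)!(\lambda_3/2)!)^2}\cdot\frac{\lambda_1!\lambda_2!\lambda_3!}{(\lambda_0+1)!}$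 with $\lambda_1 = -a+b+c$, $\lambda_2 = a-b+c$, $\lambda_3 = a+b-c$. Then $\lim_{\ell \to \infty} \ell^2 g_{\ell} = \frac{2}{\pi}\cdot\frac{1}{\sqrt{(x_1+x_2-x_3)(x_1-x_2+x_3)(-x_1+x_2+x_3)(x_1+x_2+x_3)}}$, the limit taken along $\ell$ for which the parity condition holds. -/
/-!
Write the three degrees as `a = q + r`, `b = p + r`, `c = p + q`, with `s = p + q + r`. Then the
squared 3j symbol is `C(p) C(q) C(r) / (C(s) (2s + 1))` for the central binomial coefficients
`C(n) = (2n)! / (n!)²`. By Stirling, `C(n) √n / 4ⁿ → 1 / √π`, and since `4ˢ = 4ᵖ 4^q 4ʳ` the powers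
of four cancel, leaving `√s / (π √(pqr) (2s + 1))` asymptotically. Along `ℓ`, the numbers
`p, q, r` grow like `ℓ (x₂ + x₃ - x₁) / 2`, `ℓ (x₁ + x₃ - x₂) / 2`, `ℓ (x₁ + x₂ - x₃) / 2`, which
gives the limit.
-/

open Filter Real

/-- The squared Wigner 3j symbol with zero magnetic indices (for `a+b+c` even
satisfying the triangle conditions). -/
noncomputable def wigner3jSq (a b c : ℕ) : ℝ :=
  (((((a + b + c) / 2).factorial : ℝ)) ^ 2 /
      ((((b + c - a) / 2).factorial : ℝ) * (((a + c - b) / 2).factorial : ℝ) *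
          (((a + b - c) / 2).factorial : ℝ)) ^ 2) *
    (((b + c - a).factorial : ℝ) * ((a + c - b).factorial : ℝ) *
        ((a + b - c).factorial : ℝ)) / ((a + b + c + 1).factorial : ℝ)

open Nat Topology Stirling

theorem Nat.centralBinom_mul_factorial_sq (n : ℕ) : n.centralBinom * n ! ^ 2 = (2 * n)! := by
  have h := choose_mul_factorial_mul_factorial (show n ≤ 2 * n by omega)
  rwa [show 2 * n - n = n by omega, mul_assoc, ← sq, ← centralBinom_eq_two_mul_choose] at h

noncomputable def normalizedCentralBinom (n : ℕ) : ℝ := n.centralBinom * √n / 4 ^ n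

theorem normalizedCentralBinom_eq_stirlingSeq {n : ℕ} (hn : n ≠ 0) :
    normalizedCentralBinom n = stirlingSeq (2 * n) / stirlingSeq n ^ 2 := by
  have hfac : ((2 * n)! : ℝ) = n.centralBinom * n ! ^ 2 := by
    exact_mod_cast (Nat.centralBinom_mul_factorial_sq n).symm
  have hn' : (0 : ℝ) < n := by positivity
  have hsqrt : √(2 * (2 * n : ℕ) : ℝ) = 2 * √n := by
    rw [show (2 * (2 * n : ℕ) : ℝ) = 2 ^ 2 * n by push_cast; ring, sqrt_mul (by positivity),
      sqrt_sq (by norm_num)]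
  have hs2 : √(2 * n : ℝ) ^ 2 = 2 * n := sq_sqrt (by positivity)
  have hsn : √(n : ℝ) ^ 2 = n := sq_sqrt hn'.le
  unfold normalizedCentralBinom stirlingSeq
  rw [hfac, hsqrt]
  push_cast
  field_simp
  rw [hs2, hsn, mul_div_assoc, mul_pow, pow_mul, pow_mul]
  ring

theorem tendsto_normalizedCentralBinom :
    Tendsto normalizedCentralBinom atTop (𝓝 (√π)⁻¹) := by
  have h2 : Tendsto (fun n : ℕ => stirlingSeq (2 * n)) atTop (𝓝 √π) :=
    tendsto_stirlingSeq_sqrt_pi.comp (tendsto_id.const_mul_atTop' two_pos)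
  have hπ : (√π)⁻¹ = √π / √π ^ 2 := by
    rw [sq, div_mul_cancel_left₀ (by positivity)]
  rw [hπ]
  refine (h2.div (tendsto_stirlingSeq_sqrt_pi.pow 2) (by positivity)).congr' ?_
  filter_upwards [eventually_ne_atTop 0] with n hn
  exact (normalizedCentralBinom_eq_stirlingSeq hn).symm

theorem wigner3jSq_add_add (p q r : ℕ) :
    wigner3jSq (q + r) (p + r) (p + q) =
      p.centralBinom * q.centralBinom * r.centralBinom /
        ((p + q + r).centralBinom * (2 * (p + q + r) + 1)) := by
  have hfac (n : ℕ) : ((2 * n)! : ℝ) = n.centralBinom * n ! ^ 2 := by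
    exact_mod_cast (Nat.centralBinom_mul_factorial_sq n).symm
  unfold wigner3jSq
  rw [show q + r + (p + r) + (p + q) = 2 * (p + q + r) by ring,
    show p + r + (p + q) - (q + r) = 2 * p by omega,
    show q + r + (p + q) - (p + r) = 2 * q by omega,
    show q + r + (p + r) - (p + q) = 2 * r by omega, factorial_succ]
  simp only [Nat.mul_div_cancel_left _ two_pos, cast_mul, hfac]
  push_cast
  field_simp

theorem wigner3jSq_add_add_eq_normalizedCentralBinom {p q r : ℕ} (hp : p ≠ 0) (hq : q ≠ 0)
    (hr : r ≠ 0) :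
    wigner3jSq (q + r) (p + r) (p + q) =
      normalizedCentralBinom p * normalizedCentralBinom q * normalizedCentralBinom r /
          normalizedCentralBinom (p + q + r) *
        (√(p + q + r : ℕ) / (√p * √q * √r * (2 * (p + q + r : ℕ) + 1))) := by
  rw [wigner3jSq_add_add]
  unfold normalizedCentralBinom
  rw [pow_add, pow_add]
  push_cast
  field_simp

section Asymptotics

variable {ι : Type*} {F : Filter ι} {L : ι → ℝ}

theorem tendsto_atTop_of_tendsto_div {f : ι → ℕ} {u : ℝ} (hL : Tendsto L F atTop)
    (hf : Tendsto (fun i => (f i : ℝ) / L i) F (𝓝 u)) (hu : 0 < u) : Tendsto f F atTop := by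
  refine tendsto_natCast_atTop_iff.mp ((hf.pos_mul_atTop hu hL).congr' ?_)
  filter_upwards [hL.eventually_ne_atTop 0] with i hi
  exact div_mul_cancel₀ _ hi

theorem sq_mul_sqrt_div_eq {l s p q r : ℝ} (hl : 0 < l) :
    l ^ 2 * (√s / (√p * √q * √r * (2 * s + 1))) =
      √(s / l) / (√(p / l) * √(q / l) * √(r / l) * (2 * (s / l) + l⁻¹)) := by
  obtain ⟨m, hm, rfl⟩ : ∃ m, 0 < m ∧ m ^ 2 = l := ⟨√l, sqrt_pos.2 hl, sq_sqrt hl.le⟩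
  simp only [sqrt_div' _ hl.le, sqrt_sq hm.le]
  field_simp

theorem tendsto_sq_mul_wigner3jSq_add_add {p q r : ι → ℕ} {u₁ u₂ u₃ : ℝ}
    (hL : Tendsto L F atTop) (hp : Tendsto (fun i => (p i : ℝ) / L i) F (𝓝 u₁))
    (hq : Tendsto (fun i => (q i : ℝ) / L i) F (𝓝 u₂))
    (hr : Tendsto (fun i => (r i : ℝ) / L i) F (𝓝 u₃)) (hu₁ : 0 < u₁) (hu₂ : 0 < u₂)
    (hu₃ : 0 < u₃) :
    Tendsto (fun i => L i ^ 2 * wigner3jSq (q i + r i) (p i + r i) (p i + q i)) F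
      (𝓝 (2 * π * √(u₁ * u₂ * u₃ * (u₁ + u₂ + u₃)))⁻¹) := by
  set s : ι → ℕ := fun i => p i + q i + r i
  have hs : Tendsto (fun i => (s i : ℝ) / L i) F (𝓝 (u₁ + u₂ + u₃)) :=
    ((hp.add hq).add hr).congr fun i => by simp only [s]; push_cast; ring
  have hp' := tendsto_atTop_of_tendsto_div hL hp hu₁
  have hq' := tendsto_atTop_of_tendsto_div hL hq hu₂
  have hr' := tendsto_atTop_of_tendsto_div hL hr hu₃
  have hs' := tendsto_atTop_of_tendsto_div hL hs (by positivity)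
  have hβ := tendsto_normalizedCentralBinom
  have hratio := (((hβ.comp hp').mul (hβ.comp hq')).mul (hβ.comp hr')).div (hβ.comp hs')
    (by positivity)
  have hscale := hs.sqrt.div (((hp.sqrt.mul hq.sqrt).mul hr.sqrt).mul
    ((hs.const_mul 2).add hL.inv_tendsto_atTop)) (by positivity)
  convert (hratio.mul hscale).congr' ?_ using 2
  · have hv : 0 < u₁ + u₂ + u₃ := by positivity
    rw [sqrt_mul (by positivity), sqrt_mul (by positivity), sqrt_mul hu₁.le]
    field_simp
    rw [sq_sqrt pi_pos.le, sq_sqrt hv.le]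
    ring
  · filter_upwards [hL.eventually_gt_atTop 0, hp'.eventually_ne_atTop 0,
      hq'.eventually_ne_atTop 0, hr'.eventually_ne_atTop 0] with i hLi hpi hqi hri
    rw [wigner3jSq_add_add_eq_normalizedCentralBinom hpi hqi hri, mul_left_comm,
      sq_mul_sqrt_div_eq hLi]
    rfl

theorem eventually_le_add_of_tendsto_div {a b c : ι → ℕ} {x y z : ℝ} (hL : Tendsto L F atTop)
    (ha : Tendsto (fun i => (a i : ℝ) / L i) F (𝓝 x))
    (hb : Tendsto (fun i => (b i : ℝ) / L i) F (𝓝 y))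
    (hc : Tendsto (fun i => (c i : ℝ) / L i) F (𝓝 z)) (h : x < y + z) :
    ∀ᶠ i in F, a i ≤ b i + c i := by
  have hbc : Tendsto (fun i => ((b i + c i : ℕ) : ℝ) / L i) F (𝓝 (y + z)) :=
    (hb.add hc).congr fun i => by push_cast; ring
  filter_upwards [ha.eventually_lt hbc h, hL.eventually_gt_atTop 0] with i hi hLi
  exact_mod_cast ((div_lt_div_iff_of_pos_right hLi).1 hi).le

theorem tendsto_div_of_two_mul_add_eq {p a b c : ι → ℕ} {x y z : ℝ}
    (h : ∀ᶠ i in F, 2 * p i + a i = b i + c i)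
    (ha : Tendsto (fun i => (a i : ℝ) / L i) F (𝓝 x))
    (hb : Tendsto (fun i => (b i : ℝ) / L i) F (𝓝 y))
    (hc : Tendsto (fun i => (c i : ℝ) / L i) F (𝓝 z)) :
    Tendsto (fun i => (p i : ℝ) / L i) F (𝓝 ((y + z - x) / 2)) := by
  refine (((hb.add hc).sub ha).div_const 2).congr' ?_
  filter_upwards [h] with i hi
  have hi' : (2 * p i + a i : ℝ) = b i + c i := by exact_mod_cast hi
  rw [show (p i : ℝ) = (b i + c i - a i) / 2 by linarith]
  ring

theorem tendsto_sq_mul_wigner3jSq {a b c : ι → ℕ} {x₁ x₂ x₃ : ℝ} (hL : Tendsto L F atTop)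
    (ha : Tendsto (fun i => (a i : ℝ) / L i) F (𝓝 x₁))
    (hb : Tendsto (fun i => (b i : ℝ) / L i) F (𝓝 x₂))
    (hc : Tendsto (fun i => (c i : ℝ) / L i) F (𝓝 x₃))
    (t₁ : x₁ < x₂ + x₃) (t₂ : x₂ < x₁ + x₃) (t₃ : x₃ < x₁ + x₂)
    (heven : ∀ᶠ i in F, Even (a i + b i + c i)) :
    Tendsto (fun i => L i ^ 2 * wigner3jSq (a i) (b i) (c i)) F
      (𝓝 (2 / π * (√((x₁ + x₂ - x₃) * (x₁ - x₂ + x₃) * (-x₁ + x₂ + x₃) * (x₁ + x₂ + x₃)))⁻¹)) := by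
  obtain ⟨p, q, r, hpqr⟩ : ∃ p q r : ι → ℕ,
      ∀ᶠ i in F, a i = q i + r i ∧ b i = p i + r i ∧ c i = p i + q i := by
    refine ⟨fun i => (b i + c i - a i) / 2, fun i => (a i + c i - b i) / 2,
      fun i => (a i + b i - c i) / 2, ?_⟩
    filter_upwards [eventually_le_add_of_tendsto_div hL ha hb hc t₁,
      eventually_le_add_of_tendsto_div hL hb ha hc t₂,
      eventually_le_add_of_tendsto_div hL hc ha hb t₃, heven] with i h₁ h₂ h₃ he
    rw [Nat.even_iff] at he
    omega
  have hp := tendsto_div_of_two_mul_add_eq (p := p) (hpqr.mono fun i h => by omega) ha hb hc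
  have hq := tendsto_div_of_two_mul_add_eq (p := q) (hpqr.mono fun i h => by omega) hb ha hc
  have hr := tendsto_div_of_two_mul_add_eq (p := r) (hpqr.mono fun i h => by omega) hc ha hb
  convert (tendsto_sq_mul_wigner3jSq_add_add hL hp hq hr (by linarith) (by linarith)
    (by linarith)).congr' ?_ using 2
  · rw [show (x₂ + x₃ - x₁) / 2 * ((x₁ + x₃ - x₂) / 2) * ((x₁ + x₂ - x₃) / 2) *
        ((x₂ + x₃ - x₁) / 2 + (x₁ + x₃ - x₂) / 2 + (x₁ + x₂ - x₃) / 2) =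
        (x₁ + x₂ - x₃) * (x₁ - x₂ + x₃) * (-x₁ + x₂ + x₃) * (x₁ + x₂ + x₃) / 4 ^ 2 by ring,
      sqrt_div' _ (by norm_num), sqrt_sq (by norm_num)]
    field_simp
    ring
  · filter_upwards [hpqr] with i ⟨hai, hbi, hci⟩
    rw [hai, hbi, hci]

end Asymptotics

/-- For `x₁, x₂, x₃ > 0` satisfying the strict triangle inequalities,
with `g_ℓ = (⌊ℓx₁⌋ ⌊ℓx₂⌋ ⌊ℓx₃⌋; 0 0 0)²`, one has
`ℓ² g_ℓ → (2/π) ((x₁+x₂-x₃)(x₁-x₂+x₃)(-x₁+x₂+x₃)(x₁+x₂+x₃))^{-1/2}`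
as `ℓ → ∞` along the `ℓ` for which `⌊ℓx₁⌋+⌊ℓx₂⌋+⌊ℓx₃⌋` is even. -/
theorem stmt_12 (x₁ x₂ x₃ : ℝ) (h₁ : 0 < x₁) (h₂ : 0 < x₂) (h₃ : 0 < x₃)
    (t₁ : x₁ < x₂ + x₃) (t₂ : x₂ < x₁ + x₃) (t₃ : x₃ < x₁ + x₂) :
    Tendsto
      (fun ℓ : ℕ => (ℓ : ℝ) ^ 2 *
        wigner3jSq ⌊(ℓ : ℝ) * x₁⌋₊ ⌊(ℓ : ℝ) * x₂⌋₊ ⌊(ℓ : ℝ) * x₃⌋₊)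
      (atTop ⊓ Filter.principal
        {ℓ : ℕ | Even (⌊(ℓ : ℝ) * x₁⌋₊ + ⌊(ℓ : ℝ) * x₂⌋₊ + ⌊(ℓ : ℝ) * x₃⌋₊)})
      (nhds (2 / Real.pi *
        (Real.sqrt ((x₁ + x₂ - x₃) * (x₁ - x₂ + x₃) * (-x₁ + x₂ + x₃) * (x₁ + x₂ + x₃)))⁻¹)) := by
  have hL : Tendsto (fun ℓ : ℕ => (ℓ : ℝ)) atTop atTop := tendsto_natCast_atTop_atTop
  have hfloor {x : ℝ} (hx : 0 ≤ x) :
      Tendsto (fun ℓ : ℕ => (⌊(ℓ : ℝ) * x⌋₊ : ℝ) / ℓ) atTop (𝓝 x) :=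
    ((tendsto_nat_floor_mul_div_atTop hx).comp hL).congr fun ℓ => by simp [mul_comm]
  exact tendsto_sq_mul_wigner3jSq (hL.mono_left inf_le_left)
    ((hfloor h₁.le).mono_left inf_le_left) ((hfloor h₂.le).mono_left inf_le_left)
    ((hfloor h₃.le).mono_left inf_le_left) t₁ t₂ t₃
    (eventually_inf_principal.2 (.of_forall fun _ => id))
end

section
/- $\lim_{\ell \to \infty} \ell^2 \left(\begin{smallmatrix} \ell & \ell & \ell \\ 0 & 0 & 0 \end{smallmatrix}\right)^2 = \frac{2}{\pi\sqrt{3}}$, where the squared Wigner 3j symbol with all indices equal to $\ell$ and all magnetic numbers zero equals $\frac{((3\ell/2)!)^2}{((\ell/2)!)^6}\cdot\frac{(\ell!)^3}{(3\ell+1)!}$, the limit taken along even $\ell$. -/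
/-! For `ℓ = 2n` the symbol equals `T(n)² / (T(2n) (6n + 1))`, where `T(n) = (3n)! / (n!)³`.
Stirling's formula gives `T(n) ~ √3 · 27ⁿ / (2πn)`, so the powers of `27` cancel and
`ℓ² T(n)² / (T(2n) (6n + 1)) ~ 4√3 n / (π (6n + 1)) → 2 / (π√3)`. -/

open Filter Real

open Asymptotics Nat Topology

theorem Filter.Tendsto.of_tendsto_comp_two_mul {α : Type*} {u : ℕ → α} {l : Filter α}
    (h : Tendsto (fun n ↦ u (2 * n)) atTop l) :
    Tendsto u (atTop ⊓ 𝓟 {ℓ | Even ℓ}) l := by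
  refine (tendsto_map'_iff.mpr h).mono_left fun s hs ↦ ?_
  obtain ⟨N, hN⟩ := mem_atTop_sets.mp (mem_map.mp hs)
  refine mem_inf_principal.mpr (mem_atTop_sets.mpr ⟨2 * N, ?_⟩)
  rintro _ hℓ ⟨k, rfl⟩
  rw [← two_mul]
  exact hN k (by omega)

noncomputable def centralMultinomial (k n : ℕ) : ℝ := ((k * n)! : ℝ) / (n ! : ℝ) ^ k

theorem centralMultinomial_isEquivalent {k : ℕ} (hk : k ≠ 0) :
    centralMultinomial k ~[atTop] fun n ↦ √k * (k : ℝ) ^ (k * n) / √(2 * n * π) ^ (k - 1) := by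
  have hkn : Tendsto (k * ·) atTop atTop := tendsto_id.const_mul_atTop' (Nat.pos_of_ne_zero hk)
  refine ((Stirling.factorial_isEquivalent_stirling.comp_tendsto hkn).div
    (Stirling.factorial_isEquivalent_stirling.pow k)).congr_right ?_
  filter_upwards [eventually_ne_atTop 0] with n hn
  obtain ⟨j, rfl⟩ : ∃ j, k = j + 1 := ⟨k - 1, by omega⟩
  have hsqrt : √(2 * ((j + 1 : ℕ) * n : ℕ) * π) = √(j + 1 : ℕ) * √(2 * n * π) := by
    rw [← Real.sqrt_mul (by positivity)]
    congr 1
    push_cast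
    ring
  have hpow : (((j + 1 : ℕ) * n : ℕ) / exp 1 : ℝ) ^ ((j + 1) * n)
      = ((j + 1 : ℕ) : ℝ) ^ ((j + 1) * n) * ((n / exp 1) ^ n) ^ (j + 1) := by
    rw [← pow_mul, mul_comm n, ← mul_pow]
    push_cast
    ring
  have hsqrt_ne : √(2 * n * π) ≠ 0 := by positivity
  simp only [Function.comp_apply, Pi.div_apply, Pi.pow_apply, hsqrt, hpow, Nat.add_sub_cancel]
  field_simp
  ring

theorem wigner3jSq_two_mul_self (n : ℕ) :
    wigner3jSq (2 * n) (2 * n) (2 * n)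
      = centralMultinomial 3 n ^ 2 / centralMultinomial 3 (2 * n) / (6 * n + 1) := by
  have h3 : (2 * n + 2 * n + 2 * n) / 2 = 3 * n := by omega
  have h1 : (2 * n + 2 * n - 2 * n) / 2 = n := by omega
  have h2 : 2 * n + 2 * n - 2 * n = 2 * n := by omega
  have h6 : 2 * n + 2 * n + 2 * n + 1 = 3 * (2 * n) + 1 := by omega
  rw [wigner3jSq, h3, h1, h2, h6, Nat.factorial_succ, centralMultinomial, centralMultinomial]
  push_cast
  field_simp
  ring

theorem two_mul_sq_mul_wigner3jSq_two_mul_self_isEquivalent :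
    (fun n : ℕ ↦ ((2 * n : ℕ) : ℝ) ^ 2 * wigner3jSq (2 * n) (2 * n) (2 * n)) ~[atTop]
      fun n : ℕ ↦ 2 / (π * √3) * (n / (n + 1 / 6)) := by
  have hT := centralMultinomial_isEquivalent (k := 3) (by norm_num)
  have hT2 := hT.comp_tendsto (tendsto_id.const_mul_atTop' two_pos)
  refine ((((IsEquivalent.refl (u := fun n : ℕ ↦ ((2 * n : ℕ) : ℝ) ^ 2)).mul
    ((hT.pow 2).div hT2)).div (IsEquivalent.refl (u := fun n : ℕ ↦ (6 * n + 1 : ℝ)))).congr_left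
    (.of_eq ?_)).congr_right ?_
  · ext n
    simp only [Pi.mul_apply, Pi.div_apply, Pi.pow_apply, Function.comp_apply, id,
      wigner3jSq_two_mul_self]
    ring
  · filter_upwards [eventually_ne_atTop 0] with n hn
    have h2 : √(2 * n * π) ^ 2 = 2 * n * π := Real.sq_sqrt (by positivity)
    have h4 : √(2 * (2 * n : ℕ) * π) ^ 2 = 4 * n * π := by
      rw [Real.sq_sqrt (by positivity)]
      push_cast
      ring
    have h27 : ((3 : ℝ) ^ (3 * n)) ^ 2 = 3 ^ (3 * (2 * n)) := by ring
    have h3 : √3 ^ 2 = 3 := Real.sq_sqrt (by norm_num)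
    simp only [Pi.mul_apply, Pi.div_apply, Pi.pow_apply, Function.comp_apply, id, Nat.cast_ofNat,
      div_pow, mul_pow, show 3 - 1 = 2 from rfl, h2, h4, h27, h3]
    push_cast
    field_simp
    ring

theorem tendsto_two_mul_sq_mul_wigner3jSq_two_mul_self :
    Tendsto (fun n : ℕ ↦ ((2 * n : ℕ) : ℝ) ^ 2 * wigner3jSq (2 * n) (2 * n) (2 * n)) atTop
      (𝓝 (2 / (π * √3))) := by
  simpa using two_mul_sq_mul_wigner3jSq_two_mul_self_isEquivalent.symm.tendsto_nhds
    ((tendsto_natCast_div_add_atTop (1 / 6 : ℝ)).const_mul (2 / (π * √3)))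

/-- `ℓ² (ℓ ℓ ℓ; 0 0 0)² → 2/(π√3)` as `ℓ → ∞` along even `ℓ`. -/
theorem stmt_13 :
    Tendsto (fun ℓ : ℕ => (ℓ : ℝ) ^ 2 * wigner3jSq ℓ ℓ ℓ)
      (atTop ⊓ Filter.principal {ℓ : ℕ | Even ℓ})
      (nhds (2 / (Real.pi * Real.sqrt 3))) :=
  tendsto_two_mul_sq_mul_wigner3jSq_two_mul_self.of_tendsto_comp_two_mul
end
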